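/- Let G be a star-shaped graph (a tree with exactly one branching vertex g₀) whose branches have n₁,…,n_s vertices, and let r = (ind G)². Then ρ_r(n₁) + ⋯ + ρ_r(n_s) = r, where ρ_r(n) = √r·v_n/v_{n+1} with v₀ = 0, v₁ = 1, v_{n+2} = √r·v_{n+1} − v_n. -/

import Mathlib

/-- Vertices of a star-shaped graph with s branches of sizes n k: the branching
vertex `none` together with branch vertices `some ⟨k, i⟩`. -/
abbrev StarV (s : ℕ) (n : Fin s → ℕ) : Type := Option ((k : Fin s) × Fin (n k))

/-- The star-shaped graph: on branch k, vertex i is joined to vertex i+1, and the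
last vertex of each branch (index n k − 1) is joined to the branching vertex. -/
def starGraph (s : ℕ) (n : Fin s → ℕ) : SimpleGraph (StarV s n) :=
  SimpleGraph.fromRel (fun a b =>
    match a, b with
    | some ⟨k, i⟩, some ⟨l, j⟩ => k = l ∧ (i : ℕ) + 1 = (j : ℕ)
    | some ⟨k, i⟩, none => (i : ℕ) + 1 = n k
    | _, _ => False)

/-!
Let `x` be an eigenvector for `λ = ind G`. Read along a branch from its leaf, the eigenvalue
equation is the recurrence defining `v` (with `√r = λ`, as `λ ≥ 0` because the adjacency matrix
has trace zero). Hence the entries of `x` on branch `k` are `c_k v_1, …, c_k v_{n_k}`, and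
`x(g₀) = c_k v_{n_k + 1}`, which is nonzero since otherwise `x` would vanish. The eigenvalue
equation at `g₀` then reads `λ x(g₀) = ∑ c_k v_{n_k} = x(g₀) ∑ v_{n_k} / v_{n_k + 1}`; cancel
`x(g₀)` and multiply by `λ`.
-/

open Finset Matrix

theorem eq_mul_of_recurrence {R : Type*} [CommRing R] {μ : R} {v w : ℕ → R} {N : ℕ}
    (hv0 : v 0 = 0) (hv1 : v 1 = 1)
    (hv : ∀ m < N, v (m + 2) = μ * v (m + 1) - v m) (hw0 : w 0 = 0)
    (hw : ∀ m < N, w (m + 2) = μ * w (m + 1) - w m) :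
    ∀ m ≤ N + 1, w m = w 1 * v m := by
  intro m
  induction m using Nat.twoStepInduction with
  | zero => simp [hv0, hw0]
  | one => simp [hv1]
  | more m ih₁ ih₂ =>
    intro hm
    rw [hw m (by omega), hv m (by omega), ih₁ (by omega), ih₂ (by omega)]
    ring

theorem Fin.sum_ite_val_add_one_eq {M : Type*} [AddCommMonoid M] (N t : ℕ) {g : ℕ → M}
    (hg : g 0 = 0) :
    ∑ j : Fin N, (if (j : ℕ) + 1 = t then g (j + 1) else 0) = if t ≤ N then g t else 0 := by
  have h := sum_range_succ' (fun m => if m = t then g m else 0) N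
  rw [sum_ite_eq', hg, ite_self, add_zero] at h
  simp only [Fin.sum_univ_eq_sum_range (fun j => if j + 1 = t then g (j + 1) else 0), ← h,
    mem_range, Nat.lt_succ_iff]

section StarGraph

variable {s : ℕ} {n : Fin s → ℕ}

theorem starGraph_adj_some_some {k l : Fin s} {i : Fin (n k)} {j : Fin (n l)} :
    (starGraph s n).Adj (some ⟨k, i⟩) (some ⟨l, j⟩) ↔
      k = l ∧ ((i : ℕ) + 1 = j ∨ (j : ℕ) + 1 = i) := by
  simp only [starGraph, SimpleGraph.fromRel_adj, ne_eq, Option.some.injEq]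
  constructor
  · rintro ⟨-, ⟨rfl, h⟩ | ⟨rfl, h⟩⟩ <;> simp [h]
  · rintro ⟨rfl, h⟩
    refine ⟨fun hij => ?_, by simpa using h⟩
    cases Sigma.mk.inj_iff.mp hij |>.2
    omega

theorem starGraph_adj_some_none {k : Fin s} {i : Fin (n k)} :
    (starGraph s n).Adj (some ⟨k, i⟩) none ↔ (i : ℕ) + 1 = n k := by
  simp [starGraph]

/-- The values of `x` along branch `k`, read from the leaf: `branchSeq x k (i + 1)` is the value
at the `i`-th vertex of the branch, `branchSeq x k (n k + 1)` the value at the branching vertex,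
and `branchSeq x k 0 = 0`. -/
def branchSeq {M : Type*} [Zero M] (x : StarV s n → M) (k : Fin s) : ℕ → M
  | 0 => 0
  | m + 1 => if h : m < n k then x (some ⟨k, ⟨m, h⟩⟩) else x none

theorem branchSeq_succ {M : Type*} [Zero M] (x : StarV s n → M) (k : Fin s) (i : Fin (n k)) :
    branchSeq x k (i + 1) = x (some ⟨k, i⟩) := by
  simp [branchSeq]

theorem branchSeq_succ_self {M : Type*} [Zero M] (x : StarV s n → M) (k : Fin s) :
    branchSeq x k (n k + 1) = x none := by
  simp [branchSeq]

variable [DecidableRel (starGraph s n).Adj]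

theorem starGraph_adjMatrix_mulVec_some {R : Type*} [NonAssocSemiring R] (x : StarV s n → R)
    (k : Fin s) (i : Fin (n k)) :
    ((starGraph s n).adjMatrix R *ᵥ x) (some ⟨k, i⟩) =
      branchSeq x k i + branchSeq x k (i + 2) := by
  rw [SimpleGraph.adjMatrix_mulVec_apply, SimpleGraph.neighborFinset_eq_filter, sum_filter,
    Fintype.sum_option, Fintype.sum_sigma, Fintype.sum_eq_single k]
  · simp only [starGraph_adj_some_none, starGraph_adj_some_some, true_and, ← branchSeq_succ x k]
    have hsplit : ∀ j : Fin (n k),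
        (if (i : ℕ) + 1 = j ∨ (j : ℕ) + 1 = i then branchSeq x k (j + 1) else 0) =
          (if (j : ℕ) + 1 = i + 2 then branchSeq x k (j + 1) else 0) +
            (if (j : ℕ) + 1 = i then branchSeq x k (j + 1) else 0) := by
      intro j
      split_ifs <;> first | omega | simp
    rw [Fintype.sum_congr _ _ hsplit, sum_add_distrib, Fin.sum_ite_val_add_one_eq _ _ rfl,
      Fin.sum_ite_val_add_one_eq _ _ rfl, if_pos i.isLt.le]
    by_cases hi : (i : ℕ) + 1 = n k
    · rw [if_pos hi, if_neg (by omega), show (i : ℕ) + 2 = n k + 1 by omega, branchSeq_succ_self]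
      abel
    · rw [if_neg hi, if_pos (by omega)]
      abel
  · intro l hl
    refine Fintype.sum_eq_zero _ fun j => if_neg ?_
    rw [starGraph_adj_some_some]
    exact fun h => hl h.1.symm

theorem starGraph_adjMatrix_mulVec_none {R : Type*} [NonAssocSemiring R] (x : StarV s n → R) :
    ((starGraph s n).adjMatrix R *ᵥ x) none = ∑ k, branchSeq x k (n k) := by
  rw [SimpleGraph.adjMatrix_mulVec_apply, SimpleGraph.neighborFinset_eq_filter, sum_filter,
    Fintype.sum_option, Fintype.sum_sigma, if_neg (starGraph s n).irrefl, zero_add]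
  refine Fintype.sum_congr _ _ fun k => ?_
  simp only [SimpleGraph.adj_comm _ none, starGraph_adj_some_none, ← branchSeq_succ x k]
  rw [Fin.sum_ite_val_add_one_eq _ _ rfl, if_pos le_rfl]

theorem branchSeq_add_two {R : Type*} [CommRing R] {x : StarV s n → R} {μ : R}
    (hx : (starGraph s n).adjMatrix R *ᵥ x = μ • x) (k : Fin s) :
    ∀ m < n k, branchSeq x k (m + 2) = μ * branchSeq x k (m + 1) - branchSeq x k m := by
  intro m hm
  have h := congrFun hx (some ⟨k, ⟨m, hm⟩⟩)
  rw [starGraph_adjMatrix_mulVec_some, Pi.smul_apply, smul_eq_mul] at h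
  rw [branchSeq_succ x k ⟨m, hm⟩]
  linear_combination h

theorem branchSeq_eq_mul {R : Type*} [CommRing R] {x : StarV s n → R} {μ : R}
    (hx : (starGraph s n).adjMatrix R *ᵥ x = μ • x) {v : ℕ → R} (hv0 : v 0 = 0) (hv1 : v 1 = 1)
    (hv : ∀ m, v (m + 2) = μ * v (m + 1) - v m) (k : Fin s) :
    ∀ m ≤ n k + 1, branchSeq x k m = branchSeq x k 1 * v m :=
  eq_mul_of_recurrence hv0 hv1 (fun m _ => hv m) rfl (branchSeq_add_two hx k)

theorem starGraph_eigenvector_apply_none_ne_zero {R : Type*} [CommRing R] [NoZeroDivisors R]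
    {x : StarV s n → R} {μ : R} (hx : (starGraph s n).adjMatrix R *ᵥ x = μ • x) (hx0 : x ≠ 0)
    {v : ℕ → R} (hv0 : v 0 = 0) (hv1 : v 1 = 1) (hv : ∀ m, v (m + 2) = μ * v (m + 1) - v m)
    (hvne : ∀ k, v (n k + 1) ≠ 0) :
    x none ≠ 0 := by
  intro hnone
  refine hx0 (funext fun a => ?_)
  rcases a with _ | ⟨k, i⟩
  · exact hnone
  · have hleaf : branchSeq x k 1 = 0 := by
      have h := branchSeq_eq_mul hx hv0 hv1 hv k (n k + 1) le_rfl
      rw [branchSeq_succ_self, hnone] at h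
      exact (mul_eq_zero.mp h.symm).resolve_right (hvne k)
    rw [← branchSeq_succ x, branchSeq_eq_mul hx hv0 hv1 hv k _ (by omega), hleaf, zero_mul,
      Pi.zero_apply]

theorem starGraph_sum_mul_div_eq_sq {K : Type*} [Field K] {x : StarV s n → K} {μ : K}
    (hx : (starGraph s n).adjMatrix K *ᵥ x = μ • x) (hx0 : x ≠ 0)
    {v : ℕ → K} (hv0 : v 0 = 0) (hv1 : v 1 = 1) (hv : ∀ m, v (m + 2) = μ * v (m + 1) - v m)
    (hvne : ∀ k, v (n k + 1) ≠ 0) :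
    ∑ k, μ * v (n k) / v (n k + 1) = μ ^ 2 := by
  have hbranch : ∀ k, branchSeq x k (n k) = x none * (v (n k) / v (n k + 1)) := by
    intro k
    have hcentre := branchSeq_eq_mul hx hv0 hv1 hv k (n k + 1) le_rfl
    rw [branchSeq_succ_self] at hcentre
    rw [branchSeq_eq_mul hx hv0 hv1 hv k (n k) (by omega), hcentre]
    field_simp [hvne k]
  have hcentre : μ * x none = x none * ∑ k, v (n k) / v (n k + 1) := by
    have h := congrFun hx none
    rw [starGraph_adjMatrix_mulVec_none, Pi.smul_apply, smul_eq_mul] at h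
    rw [← h, mul_sum]
    exact sum_congr rfl fun k _ => hbranch k
  have hμ : ∑ k, v (n k) / v (n k + 1) = μ :=
    mul_left_cancel₀ (starGraph_eigenvector_apply_none_ne_zero hx hx0 hv0 hv1 hv hvne)
      (by rw [← hcentre, mul_comm])
  simp_rw [mul_div_assoc, ← mul_sum, hμ, sq]

end StarGraph

theorem Matrix.IsHermitian.iSup_eigenvalues_nonneg {𝕜 ι : Type*} [RCLike 𝕜] [Fintype ι]
    [DecidableEq ι] [Nonempty ι] {A : Matrix ι ι 𝕜} (hA : A.IsHermitian) (htr : A.trace = 0) :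
    0 ≤ ⨆ i, hA.eigenvalues i := by
  have hsum : ∑ i, hA.eigenvalues i = 0 := by
    rw [← RCLike.ofReal_eq_zero (K := 𝕜), RCLike.ofReal_sum, ← hA.trace_eq_sum_eigenvalues, htr]
  by_contra! hneg
  have hlt : ∑ i, hA.eigenvalues i < 0 :=
    sum_neg (fun i _ => (le_ciSup (Set.finite_range _).bddAbove i).trans_lt hneg) univ_nonempty
  exact hlt.ne hsum

theorem stmt_19 (s : ℕ) (n : Fin s → ℕ)
    [DecidableRel (starGraph s n).Adj]
    (hA : ((starGraph s n).adjMatrix ℝ).IsHermitian)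
    (lam : ℝ) (hlam : lam = ⨆ i, hA.eigenvalues i)
    (r : ℝ) (hr : r = lam ^ 2)
    (v : ℕ → ℝ) (hv0 : v 0 = 0) (hv1 : v 1 = 1)
    (hvrec : ∀ m, v (m + 2) = Real.sqrt r * v (m + 1) - v m)
    (hvne : ∀ k, v (n k + 1) ≠ 0) :
    ∑ k : Fin s, Real.sqrt r * v (n k) / v (n k + 1) = r := by
  obtain ⟨i, hi⟩ := exists_eq_ciSup_of_finite (f := hA.eigenvalues)
  have hlam0 : 0 ≤ lam := hlam ▸ hA.iSup_eigenvalues_nonneg (SimpleGraph.trace_adjMatrix _ _)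
  have hsqrt : Real.sqrt r = lam := by rw [hr, Real.sqrt_sq hlam0]
  rw [hsqrt] at hvrec ⊢
  rw [hr]
  refine starGraph_sum_mul_div_eq_sq (x := ⇑(hA.eigenvectorBasis i)) ?_ ?_ hv0 hv1 hvrec hvne
  · rw [hlam, ← hi]
    exact hA.mulVec_eigenvectorBasis i
  · exact (WithLp.ofLp_eq_zero 2).ne.2 (hA.eigenvectorBasis.orthonormal.ne_zero i)
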